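/- Let G be a finite tree with ends, and assign to each end a natural number flow. Define a flow-spreading procedure: initialize all non-end half-edge flows to 0; repeatedly pick a vertex v with incoming edges e_inc,1,…, and for each bounded edge at v set the flow on the outgoing half-edge e_out,i to flow(v) − R(e_inc,i) − 1 if flow(v) − R(e_inc,i) > 0, and to 0 if flow(v) − R(e_inc,i) = 0 and flow(v) ≠ 0, always taking the maximum with the current value; here flow(v) is the current sum of flows on incoming edges of v. Then this procedure terminates, and the resulting flow structure on G is unique, i.e. independent of the order in which vertices are processed. -/

import Mathlib

/-!
On a tree, the flow that `v` sends towards a neighbour `w` is determined by the branch of the tree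
on `v`'s side of the edge `vw`, and for every other neighbour `u` of `v` the branch on `u`'s side
of `uv` is strictly smaller. So the stability equations can be solved by well-founded recursion on
the size of the branch, and the same recursion shows that this solution lies below every stable
state. Being least, it is unique.
-/

open Finset

namespace SimpleGraph

variable {V : Type*} {G : SimpleGraph V}

def branch (G : SimpleGraph V) (v w : V) : Set V :=
  {x | (G.deleteEdges {s(v, w)}).Reachable v x}

theorem IsAcyclic.branch_ssubset_branch (hG : G.IsAcyclic) {u v w : V} (huv : G.Adj u v)
    (huw : u ≠ w) : G.branch u v ⊂ G.branch v w := by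
  have hbridge : G.IsBridge s(u, v) := isAcyclic_iff_forall_adj_isBridge.mp hG huv
  refine ⟨fun x hx => ?_, fun hsub => isBridge_iff.mp hbridge (hsub (Reachable.refl v))⟩
  obtain ⟨p, hp⟩ := reachable_deleteEdges_iff_exists_walk.mp hx
  have hv : v ∉ p.support := by
    classical
    exact fun hv => hp (p.edges_takeUntil_subset_edges hv
      (isBridge_iff_forall_walk_mem_edges.mp hbridge _))
  refine reachable_deleteEdges_iff_exists_walk.mpr ⟨.cons huv.symm p, ?_⟩
  rw [Walk.edges_cons, List.mem_cons, not_or]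
  exact ⟨fun h => huw (Sym2.congr_right.mp h).symm,
    fun h => hv (p.fst_mem_support_of_mem_edges h)⟩

variable [Fintype V] [DecidableEq V] [DecidableRel G.Adj]

/-- `s v w` is the flow on the half-edge of `vw` at `v`, and `A v` the flow entering `v` through
its ends. -/
def IsStableFlow (G : SimpleGraph V) [DecidableRel G.Adj] (A : V → ℕ) (s : V → V → ℕ) :
    Prop :=
  (∀ v w, ¬ G.Adj v w → s v w = 0) ∧
    ∀ v w, G.Adj v w → (A v + ∑ u ∈ G.neighborFinset v, s u v) - s w v - 1 ≤ s v w

theorem inflow_sub_eq_sum_erase (A : V → ℕ) (s : V → V → ℕ) {v w : V} (h : G.Adj v w) :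
    (A v + ∑ u ∈ G.neighborFinset v, s u v) - s w v - 1
      = (A v + ∑ u ∈ (G.neighborFinset v).erase w, s u v) - 1 := by
  rw [← add_sum_erase _ _ ((mem_neighborFinset G v w).mpr h)]
  omega

namespace IsAcyclic

theorem ncard_branch_lt_of_mem_erase (hG : G.IsAcyclic) {u v w : V}
    (hu : u ∈ (G.neighborFinset v).erase w) : (G.branch u v).ncard < (G.branch v w).ncard := by
  obtain ⟨huw, huv⟩ := mem_erase.mp hu
  exact Set.ncard_lt_ncard (hG.branch_ssubset_branch ((mem_neighborFinset G v u).mp huv).symm huw)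
    (Set.toFinite _)

/-- The result of the flow-spreading procedure. -/
noncomputable def spreadFlow (hG : G.IsAcyclic) (A : V → ℕ) (v w : V) : ℕ :=
  if G.Adj v w then
    (A v + ∑ u ∈ ((G.neighborFinset v).erase w).attach, hG.spreadFlow A u.1 v) - 1
  else 0
termination_by (G.branch v w).ncard
decreasing_by exact hG.ncard_branch_lt_of_mem_erase u.2

variable (hG : G.IsAcyclic) (A : V → ℕ)

theorem spreadFlow_of_adj {v w : V} (h : G.Adj v w) :
    hG.spreadFlow A v w =
      (A v + ∑ u ∈ (G.neighborFinset v).erase w, hG.spreadFlow A u v) - 1 := by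
  rw [spreadFlow, if_pos h, sum_attach _ (fun u => hG.spreadFlow A u v)]

theorem spreadFlow_of_not_adj {v w : V} (h : ¬ G.Adj v w) : hG.spreadFlow A v w = 0 := by
  rw [spreadFlow, if_neg h]

theorem isStableFlow_spreadFlow : IsStableFlow G A (hG.spreadFlow A) :=
  ⟨fun _ _ h => hG.spreadFlow_of_not_adj A h, fun _ _ h => by
    rw [inflow_sub_eq_sum_erase A _ h, ← hG.spreadFlow_of_adj A h]⟩

theorem spreadFlow_le {s : V → V → ℕ} (hs : IsStableFlow G A s) (v w : V) :
    hG.spreadFlow A v w ≤ s v w := by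
  by_cases h : G.Adj v w
  · have hsum : ∑ u ∈ (G.neighborFinset v).erase w, hG.spreadFlow A u v
        ≤ ∑ u ∈ (G.neighborFinset v).erase w, s u v :=
      sum_le_sum fun u _ => spreadFlow_le hs u v
    calc hG.spreadFlow A v w
        = (A v + ∑ u ∈ (G.neighborFinset v).erase w, hG.spreadFlow A u v) - 1 :=
          hG.spreadFlow_of_adj A h
      _ ≤ (A v + ∑ u ∈ (G.neighborFinset v).erase w, s u v) - 1 := by omega
      _ = (A v + ∑ u ∈ G.neighborFinset v, s u v) - s w v - 1 :=
          (inflow_sub_eq_sum_erase A s h).symm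
      _ ≤ s v w := hs.2 v w h
  · simp [hG.spreadFlow_of_not_adj A h]
termination_by (G.branch v w).ncard
decreasing_by exact hG.ncard_branch_lt_of_mem_erase ‹_›

theorem isLeast_spreadFlow : IsLeast {s | IsStableFlow G A s} (hG.spreadFlow A) :=
  ⟨hG.isStableFlow_spreadFlow A, fun _ hs => hG.spreadFlow_le A hs⟩

end IsAcyclic

end SimpleGraph

/-- The flow-spreading procedure on a finite tree terminates and its result is
unique: there is a unique least state `s` (flows on half-edges, `s v w` being
the flow on the half-edge of the bounded edge `{v,w}` adjacent to `v`) that is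
stable under the update rule `R(e_out) = flow(v) - R(e_inc) - 1` (truncated),
where `flow(v)` is the sum of the given end flows at `v` and of the flows on the
incoming half-edges at `v`. -/
theorem flow_spreading_terminates_uniquely
    {V E : Type*} [Fintype V] [DecidableEq V] [Fintype E]
    (G : SimpleGraph V) [DecidableRel G.Adj] (hT : G.IsTree)
    (endVertex : E → V) (Rend : E → ℕ) :
    ∃! s : V → V → ℕ,
      ((∀ v w, ¬ G.Adj v w → s v w = 0) ∧
       (∀ v w, G.Adj v w →
         ((∑ e : E, if endVertex e = v then Rend e else 0)
            + ∑ u ∈ G.neighborFinset v, s u v) - s w v - 1 ≤ s v w)) ∧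
      (∀ s' : V → V → ℕ,
        ((∀ v w, ¬ G.Adj v w → s' v w = 0) ∧
         (∀ v w, G.Adj v w →
           ((∑ e : E, if endVertex e = v then Rend e else 0)
              + ∑ u ∈ G.neighborFinset v, s' u v) - s' w v - 1 ≤ s' v w)) →
        ∀ v w, s v w ≤ s' v w) := by
  have hleast :=
    hT.isAcyclic.isLeast_spreadFlow fun v => ∑ e : E, if endVertex e = v then Rend e else 0
  exact ⟨_, hleast, fun _ hs => (hleast.unique hs).symm⟩
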